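/- arXiv:1509.03680 — 3 statements merged into one kernel-verified Lean document; each statement's English description precedes it below -/
import Mathlib

section
/- For positive integers s and m, the number of lattice points in the dilate n·([0,1/s] × [0,m]) equals (m/s)n² + (m·c(n) + 1/s)n + c(n), where c(n) = ⌊n/s⌋ - n/s + 1. In particular, the linear coefficient function n ↦ m·c(n) + 1/s has minimal period exactly s. -/
/-- For positive integers `s, m`, the lattice point count of the `n`-th dilate of the
rectangle `[0,1/s] × [0,m]` is `(m/s)n² + (m·c(n) + 1/s)n + c(n)` with
`c(n) = ⌊n/s⌋ - n/s + 1`; the linear coefficient function `n ↦ m·c(n) + 1/s`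
has minimal period exactly `s`. -/
theorem stmt_2 (s m : ℕ) (hs : 0 < s) (hm : 0 < m) (c : ℤ → ℚ)
    (hc : ∀ n : ℤ, c n = (⌊(n : ℚ) / s⌋ : ℚ) - (n : ℚ) / s + 1) :
    (∀ n : ℤ, 1 ≤ n →
      (({p : ℤ × ℤ | 0 ≤ (p.1 : ℚ) ∧ (p.1 : ℚ) ≤ (n : ℚ) / s
          ∧ 0 ≤ p.2 ∧ (p.2 : ℚ) ≤ (m : ℚ) * n}.ncard : ℚ)
        = (m / s) * n ^ 2 + (m * c n + 1 / s) * n + c n)) ∧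
    IsLeast {p : ℕ | 0 < p ∧ ∀ n : ℤ, m * c (n + p) + 1 / s = m * c n + 1 / s} s := by
  have hsQ : (0 : ℚ) < s := by exact_mod_cast hs
  have hsne : (s : ℚ) ≠ 0 := ne_of_gt hsQ
  constructor
  · intro n hn
    set F := ⌊(n : ℚ) / s⌋ with hF
    have hF0 : 0 ≤ F := Int.floor_nonneg.mpr (by positivity)
    have hset : {p : ℤ × ℤ | 0 ≤ (p.1 : ℚ) ∧ (p.1 : ℚ) ≤ (n : ℚ) / s
          ∧ 0 ≤ p.2 ∧ (p.2 : ℚ) ≤ (m : ℚ) * n}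
        = ↑(Finset.Icc (0 : ℤ) F ×ˢ Finset.Icc (0 : ℤ) ((m : ℤ) * n)) := by
      ext p
      simp only [Set.mem_setOf_eq, Finset.coe_product, Set.mem_prod, Finset.mem_coe,
        Finset.mem_Icc]
      constructor
      · rintro ⟨h1, h2, h3, h4⟩
        refine ⟨⟨by exact_mod_cast h1, Int.le_floor.mpr h2⟩, h3, by exact_mod_cast h4⟩
      · rintro ⟨⟨h1, h2⟩, h3, h4⟩
        exact ⟨by exact_mod_cast h1, Int.le_floor.mp h2, h3, by exact_mod_cast h4⟩
    have hmn : (0 : ℤ) ≤ (m : ℤ) * n := by positivity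
    have hcard : ({p : ℤ × ℤ | 0 ≤ (p.1 : ℚ) ∧ (p.1 : ℚ) ≤ (n : ℚ) / s
          ∧ 0 ≤ p.2 ∧ (p.2 : ℚ) ≤ (m : ℚ) * n}.ncard : ℚ)
        = ((F : ℚ) + 1) * ((m : ℚ) * n + 1) := by
      rw [hset, Set.ncard_coe_finset, Finset.card_product, Int.card_Icc, Int.card_Icc]
      have h1 : (((F + 1 - 0).toNat : ℤ) : ℚ) = (F : ℚ) + 1 := by
        rw [Int.toNat_of_nonneg (by omega)]; push_cast; ring
      have h2 : ((((m : ℤ) * n + 1 - 0).toNat : ℤ) : ℚ) = (m : ℚ) * n + 1 := by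
        rw [Int.toNat_of_nonneg (by omega)]; push_cast; ring
      push_cast [← h1, ← h2]
      ring
    rw [hcard, hc]
    field_simp
    ring
  · constructor
    · refine ⟨hs, fun n => ?_⟩
      have hcc : c (n + s) = c n := by
        rw [hc, hc]
        have : ((n + (s : ℤ) : ℤ) : ℚ) / s = (n : ℚ) / s + 1 := by
          push_cast; field_simp
        rw [this, Int.floor_add_one]
        push_cast; ring
      rw [hcc]
    · rintro p ⟨hp0, hpP⟩
      have h := hpP 0
      have hc0 : c 0 = 1 := by rw [hc]; norm_num
      have hcp : c ((0 : ℤ) + p) = 1 := by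
        have hmQ : (m : ℚ) ≠ 0 := by positivity
        rw [hc0] at h
        exact mul_left_cancel₀ hmQ (by linarith : (m : ℚ) * c ((0:ℤ) + p) = (m : ℚ) * 1)
      rw [hc] at hcp
      have hpp : ((((0:ℤ) + p : ℤ)) : ℚ) = (p : ℚ) := by push_cast; ring
      rw [hpp] at hcp
      have hfl : (⌊(p : ℚ) / s⌋ : ℚ) = (p : ℚ) / s := by linarith
      have hdvd : (s : ℤ) ∣ (p : ℤ) := by
        refine ⟨⌊(p : ℚ) / s⌋, ?_⟩
        have : (p : ℚ) = (s : ℚ) * (⌊(p : ℚ) / s⌋ : ℚ) := by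
          rw [hfl]; field_simp
        exact_mod_cast this
      have : s ∣ p := by exact_mod_cast hdvd
      exact Nat.le_of_dvd hp0 this
end

section
/- Let P = [a,b] ⊂ ℝ be a rational segment with a < b rational, whose Ehrhart quasi-polynomial is L_P(n) = c_1(n) n + c_0(n) with each c_i periodic, and let s_i denote the minimal period of c_i. Then s_1 divides the 1-index j_1 of P, the least positive integer k such that the affine span of every 1-dimensional face of k·P contains a lattice point, and s_0 divides j_0, the least positive integer k such that ka, kb ∈ ℤ. -/
/-- McMullen's theorem in dimension one: for a rational segment `P = [a,b]` with
`L_P(n) = ⌊nb⌋ - ⌈na⌉ + 1 = c₁·n + c₀(n)`, where `c₁ = b - a` and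
`c₀(n) = ⌊nb⌋ - ⌈na⌉ + 1 - (b-a)n`, the minimal period `s₀` of `c₀` divides the
`0`-index `j₀` (the least positive integer `k` with `ka, kb ∈ ℤ`), and the minimal
period `s₁` of the constant function `c₁` divides the `1`-index `j₁ = 1`. -/
theorem stmt_15 (a b : ℚ) (hab : a < b)
    (c₀ : ℕ → ℚ)
    (hc₀ : ∀ n : ℕ, c₀ n = ((⌊(n : ℚ) * b⌋ : ℚ) - (⌈(n : ℚ) * a⌉ : ℚ) + 1) - (b - a) * n)
    (j₀ : ℕ) (hj₀ : IsLeast {k : ℕ | 0 < k ∧ ((k : ℚ) * a).den = 1 ∧ ((k : ℚ) * b).den = 1} j₀)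
    (s₀ : ℕ) (hs₀ : IsLeast {p : ℕ | 0 < p ∧ ∀ n : ℕ, c₀ (n + p) = c₀ n} s₀)
    (c₁ : ℕ → ℚ) (hc₁ : ∀ n : ℕ, c₁ n = b - a)
    (s₁ : ℕ) (hs₁ : IsLeast {p : ℕ | 0 < p ∧ ∀ n : ℕ, c₁ (n + p) = c₁ n} s₁) :
    s₀ ∣ j₀ ∧ s₁ ∣ 1 := by
  obtain ⟨⟨hj0pos, hja, hjb⟩, hjmin⟩ := hj₀
  obtain ⟨⟨hs0pos, hper⟩, hsmin⟩ := hs₀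
  constructor
  · obtain ⟨ma, hma⟩ : ∃ m : ℤ, ((j₀ : ℚ) * a) = m :=
      ⟨_, ((Rat.den_eq_one_iff _).mp hja).symm⟩
    obtain ⟨mb, hmb⟩ : ∃ m : ℤ, ((j₀ : ℚ) * b) = m :=
      ⟨_, ((Rat.den_eq_one_iff _).mp hjb).symm⟩
    have hjper : ∀ n : ℕ, c₀ (n + j₀) = c₀ n := by
      intro n
      rw [hc₀, hc₀]
      push_cast
      rw [add_mul, add_mul, hma, hmb, Int.floor_add_intCast, Int.ceil_add_intCast]
      push_cast
      linear_combination hma - hmb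
    have hmul : ∀ k n : ℕ, c₀ (n + k * s₀) = c₀ n := by
      intro k
      induction k with
      | zero => simp
      | succ k ih =>
        intro n
        rw [Nat.succ_mul, ← add_assoc, hper (n + k * s₀), ih]
    by_contra hdvd
    have hr : 0 < j₀ % s₀ := Nat.pos_of_ne_zero fun h => hdvd (Nat.dvd_of_mod_eq_zero h)
    have hle : s₀ ≤ j₀ % s₀ := hsmin ⟨hr, fun n => by
      have h1 := hmul (j₀ / s₀) (n + j₀ % s₀)
      rw [add_assoc, Nat.mod_add_div'] at h1
      rw [← h1, hjper n]⟩
    exact absurd hle (Nat.not_le.mpr (Nat.mod_lt _ hs0pos))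
  · exact Nat.dvd_one.mpr (Nat.le_antisymm
      (hs₁.2 ⟨one_pos, fun n => by rw [hc₁, hc₁]⟩) hs₁.1.1)
end

section
/- The indices of a d-dimensional rational polytope form a divisibility chain: if j_i denotes the i-index of P (the least positive integer m such that the affine span of every i-dimensional face of mP contains a lattice point), then j_d ∣ j_{d-1} ∣ ⋯ ∣ j_0. -/
open Pointwise Module

namespace Stmt16Aux

variable {E : Type*} [AddCommGroup E] [Module ℝ E]

lemma linear_eq_on_affineSpan (f : E →ₗ[ℝ] ℝ) (c : ℝ) {s : Set E}
    (h : ∀ x ∈ s, f x = c) {x : E} (hx : x ∈ affineSpan ℝ s) : f x = c := by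
  refine affineSpan_induction (p := fun y => f y = c) hx h ?_
  intro r u v w hu hv hw
  simp only [vsub_eq_sub, vadd_eq_add, map_add, map_smul, map_sub, smul_eq_mul, hu, hv, hw]
  ring

lemma finrank_lt_of_sep [FiniteDimensional ℝ E] (f : E →ₗ[ℝ] ℝ) (c : ℝ) {s t : Set E}
    (h1 : affineSpan ℝ s ≤ affineSpan ℝ t) (hs : s.Nonempty)
    (hall : ∀ x ∈ s, f x = c) {x1 : E} (hx1 : x1 ∈ affineSpan ℝ t) (hne : f x1 ≠ c) :
    finrank ℝ (vectorSpan ℝ s) < finrank ℝ (vectorSpan ℝ t) := by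
  have hle : vectorSpan ℝ s ≤ vectorSpan ℝ t := by
    rw [← direction_affineSpan, ← direction_affineSpan]
    exact AffineSubspace.direction_le h1
  by_contra hcon
  push_neg at hcon
  have heq : vectorSpan ℝ s = vectorSpan ℝ t := Submodule.eq_of_le_of_finrank_le hle hcon
  obtain ⟨p, hp⟩ := hs
  have hspan : affineSpan ℝ s = affineSpan ℝ t := by
    apply AffineSubspace.ext_of_direction_eq
    · rw [direction_affineSpan, direction_affineSpan]; exact heq
    · exact ⟨p, subset_affineSpan ℝ s hp, h1 (subset_affineSpan ℝ s hp)⟩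
  exact hne (linear_eq_on_affineSpan f c hall (hspan ▸ hx1))

lemma finrank_vectorSpan_insert_lt [FiniteDimensional ℝ E] {s : Set E} (hs : s.Nonempty)
    {p : E} (hp : p ∉ affineSpan ℝ s) :
    finrank ℝ (vectorSpan ℝ s) < finrank ℝ (vectorSpan ℝ (insert p s)) := by
  apply Submodule.finrank_lt_finrank_of_lt
  refine lt_of_le_of_ne (vectorSpan_mono ℝ (Set.subset_insert p s)) ?_
  intro heq
  obtain ⟨q, hq⟩ := hs
  have hv : p -ᵥ q ∈ vectorSpan ℝ s := by
    rw [heq]; exact vsub_mem_vectorSpan ℝ (Set.mem_insert p s) (Set.mem_insert_of_mem _ hq)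
  have hq' : q ∈ affineSpan ℝ s := subset_affineSpan ℝ s hq
  have := AffineSubspace.vadd_mem_of_mem_direction
    (by rw [direction_affineSpan]; exact hv) hq'
  simp only [vsub_vadd] at this
  exact hp this

lemma extreme_mem_of_centerMass {P G : Set E} (hPc : Convex ℝ P) (hG : IsExtreme ℝ P G) :
    ∀ S : Finset E, (S : Set E) ⊆ P → ∀ w : E → ℝ, (∀ v ∈ S, 0 < w v) →
      0 < ∑ v ∈ S, w v → S.centerMass w id ∈ G → ∀ v ∈ S, v ∈ G := by
  classical
  intro S
  induction S using Finset.induction_on with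
  | empty => intro _ w _ h; simp at h
  | @insert a S' ha ih =>
    intro hsub w hpos hsum hmem v hv
    rcases S'.eq_empty_or_nonempty with rfl | hS'
    · have h1 : w a ≠ 0 := ne_of_gt (hpos a (by simp))
      have : (insert a (∅ : Finset E)).centerMass w id = a := by
        simpa using Finset.centerMass_singleton a id h1
      rw [this] at hmem
      simp only [Finset.mem_insert, Finset.notMem_empty, or_false] at hv
      exact hv ▸ hmem
    · have hσ : 0 < ∑ v ∈ S', w v :=
        Finset.sum_pos (fun v hv => hpos v (Finset.mem_insert_of_mem hv)) hS'
      have hwa : 0 < w a := hpos a (Finset.mem_insert_self a S')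
      have hτ : 0 < w a + ∑ v ∈ S', w v := by linarith
      have hsub' : (S' : Set E) ⊆ P := fun x hx =>
        hsub (Finset.mem_coe.mpr (Finset.mem_insert_of_mem (Finset.mem_coe.mp hx)))
      set y := S'.centerMass w id with hy
      have hyP : y ∈ P := by
        have := S'.centerMass_mem_convexHull
          (fun v hv => (hpos v (Finset.mem_insert_of_mem hv)).le) hσ
          (fun v hv => hsub' (Finset.mem_coe.mpr hv))
        rwa [hPc.convexHull_eq] at this
      have haP : a ∈ P := hsub (by simp)
      have hx : (insert a S').centerMass w id =
          (w a / (w a + ∑ v ∈ S', w v)) • a +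
            ((∑ v ∈ S', w v) / (w a + ∑ v ∈ S', w v)) • y :=
        Finset.centerMass_insert a S' id ha (ne_of_gt hσ)
      have hseg : (insert a S').centerMass w id ∈ openSegment ℝ a y := by
        refine ⟨w a / (w a + ∑ v ∈ S', w v), (∑ v ∈ S', w v) / (w a + ∑ v ∈ S', w v),
          div_pos hwa hτ, div_pos hσ hτ, ?_, hx.symm⟩
        field_simp
      obtain ⟨haG, hyG⟩ := And.intro (hG.2 haP hyP hmem hseg)
        (hG.right_mem_of_mem_openSegment haP hyP hmem hseg)
      rcases Finset.mem_insert.mp hv with rfl | hv'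
      · exact haG
      · exact ih hsub' w (fun v hv => hpos v (Finset.mem_insert_of_mem hv)) hσ hyG v hv'

lemma face_hull {P G : Set E} (hPc : Convex ℝ P) (VF : Finset E)
    (hP : P = convexHull ℝ (VF : Set E)) (hG : IsExtreme ℝ P G) (hGc : Convex ℝ G) :
    ∃ W : Finset E, (W : Set E) ⊆ G ∧ G = convexHull ℝ (W : Set E) := by
  classical
  refine ⟨VF.filter (· ∈ G), fun x hx => by
    simpa using (Finset.mem_filter.mp (by exact_mod_cast hx)).2, ?_⟩
  apply Set.Subset.antisymm
  · intro x hxG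
    have hxP : x ∈ P := hG.1 hxG
    rw [hP, Finset.convexHull_eq] at hxP
    obtain ⟨w, hw0, hw1, hwx⟩ := hxP
    set S := VF.filter (fun v => w v ≠ 0) with hS
    have hSc : S.centerMass w id = x := by
      rw [hS, Finset.centerMass_filter_ne_zero]; exact hwx
    have hSpos : ∀ v ∈ S, 0 < w v := fun v hv => by
      obtain ⟨hvV, hvne⟩ := Finset.mem_filter.mp hv
      exact lt_of_le_of_ne (hw0 _ hvV) (Ne.symm hvne)
    have hSsum : 0 < ∑ v ∈ S, w v := by
      rw [hS, Finset.sum_filter_ne_zero, hw1]; norm_num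
    have hSsubP : (S : Set E) ⊆ P := fun v hv => by
      rw [hP]
      exact subset_convexHull ℝ _ (by
        exact_mod_cast Finset.filter_subset _ _ (by exact_mod_cast hv))
    have hmemG := extreme_mem_of_centerMass hPc hG S hSsubP w hSpos hSsum (hSc ▸ hxG)
    have hxS : x ∈ convexHull ℝ (S : Set E) :=
      hSc ▸ S.centerMass_mem_convexHull (fun v hv => (hSpos v hv).le) hSsum
        (fun v hv => Finset.mem_coe.mpr hv)
    refine convexHull_mono ?_ hxS
    intro v hv
    have hv' := Finset.mem_coe.mp hv
    exact Finset.mem_coe.mpr (Finset.mem_filter.mpr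
      ⟨Finset.mem_of_mem_filter v hv', hmemG v hv'⟩)
  · exact convexHull_min (fun x hx => by
      simpa using (Finset.mem_filter.mp (by exact_mod_cast hx)).2) hGc

open Classical in
lemma facet_step [FiniteDimensional ℝ E] (W : Finset E) {k : ℕ}
    (hdim : finrank ℝ (vectorSpan ℝ (W : Set E)) = k)
    (f : E →ₗ[ℝ] ℝ) (c : ℝ)
    (hle : ∀ w ∈ W, f w ≤ c)
    (hmax : ∃ w ∈ W, f w = c)
    (hprop : ∃ w ∈ W, f w ≠ c)
    (hsmall : finrank ℝ (vectorSpan ℝ ((W.filter (fun w => f w = c)) : Set E)) + 1 < k) :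
    ∃ (f' : E →ₗ[ℝ] ℝ) (c' : ℝ),
      (∀ w ∈ W, f' w ≤ c') ∧ (∃ w ∈ W, f' w = c') ∧ (∃ w ∈ W, f' w ≠ c') ∧
      finrank ℝ (vectorSpan ℝ ((W.filter (fun w => f w = c)) : Set E)) <
        finrank ℝ (vectorSpan ℝ ((W.filter (fun w => f' w = c')) : Set E)) := by
  classical
  set W₁ := W.filter (fun w => f w = c) with hW₁def
  set j := finrank ℝ (vectorSpan ℝ (W₁ : Set E)) with hjdef
  obtain ⟨w₀, hw₀W, hw₀c⟩ := hmax
  have hw₀ : w₀ ∈ W₁ := Finset.mem_filter.mpr ⟨hw₀W, hw₀c⟩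
  have hw₀s : (w₀ : E) ∈ (W₁ : Set E) := Finset.mem_coe.mpr hw₀
  obtain ⟨x1, hx1W, hx1c⟩ := hprop
  have hx1lt : f x1 < c := lt_of_le_of_ne (hle x1 hx1W) hx1c
  set T := affineSpan ℝ (insert x1 (W₁ : Set E)) with hT
  have hW₁T : (W₁ : Set E) ⊆ (T : Set E) := fun x hx =>
    subset_affineSpan ℝ _ (Set.mem_insert_of_mem _ hx)
  have hx1T : x1 ∈ T := subset_affineSpan ℝ _ (Set.mem_insert _ _)
  have hw₀T : w₀ ∈ T := hW₁T hw₀s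
  -- every W₁-member lies in T, and f = c on affineSpan W₁
  have hspanW₁T : affineSpan ℝ (W₁ : Set E) ≤ T := by
    rw [affineSpan_le]; exact hW₁T
  -- dimension bound on T
  have hTdim : finrank ℝ T.direction ≤ j + 1 := by
    have h1 : T = affineSpan ℝ (insert x1 ((affineSpan ℝ (W₁ : Set E) : Set E))) :=
      (affineSpan_insert_affineSpan ℝ x1 (W₁ : Set E)).symm
    have h2 := AffineSubspace.direction_affineSpan_insert
      (k := ℝ) (s := affineSpan ℝ (W₁ : Set E)) (p₂ := x1) (subset_affineSpan ℝ _ hw₀s)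
    rw [h1, h2]
    have h3 : finrank ℝ ↥(Submodule.span ℝ ({x1 -ᵥ w₀} : Set E) ⊔ (affineSpan ℝ (W₁ : Set E)).direction)
        ≤ finrank ℝ (Submodule.span ℝ ({x1 -ᵥ w₀} : Set E)) +
          finrank ℝ (affineSpan ℝ (W₁ : Set E)).direction :=
      Submodule.finrank_add_le_finrank_add_finrank _ _
    have h4 : finrank ℝ (Submodule.span ℝ ({x1 -ᵥ w₀} : Set E)) ≤ 1 := by
      by_cases hz : (x1 -ᵥ w₀ : E) = 0
      · rw [hz, Submodule.span_zero_singleton]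
        simp
      · rw [finrank_span_singleton hz]
    have h5 : finrank ℝ (affineSpan ℝ (W₁ : Set E)).direction = j := by
      rw [direction_affineSpan]
    omega
  -- find x2 outside T
  have hx2ex : ∃ x2 ∈ W, x2 ∉ T := by
    by_contra h
    push_neg at h
    have h1 : affineSpan ℝ (W : Set E) ≤ T := by
      rw [affineSpan_le]; intro x hx; exact h x (Finset.mem_coe.mp hx)
    have h2 : vectorSpan ℝ (W : Set E) ≤ T.direction := by
      rw [← direction_affineSpan]; exact AffineSubspace.direction_le h1
    have h3 := Submodule.finrank_mono h2
    omega
  obtain ⟨x2, hx2W, hx2T⟩ := hx2ex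
  have hvT : (x2 - w₀ : E) ∉ T.direction := by
    intro hv
    have := AffineSubspace.vadd_mem_of_mem_direction hv hw₀T
    rw [vadd_eq_add, sub_add_cancel] at this
    exact hx2T this
  obtain ⟨φ₀, hφ₀x, hφ₀map⟩ := Submodule.exists_dual_map_eq_bot_of_notMem hvT inferInstance
  have hφ₀T : ∀ u ∈ T.direction, φ₀ u = 0 := by
    intro u hu
    have h1 : φ₀ u ∈ T.direction.map φ₀ := Submodule.mem_map_of_mem hu
    rw [hφ₀map] at h1
    simpa using h1
  set φ : E →ₗ[ℝ] ℝ := (φ₀ (x2 - w₀))⁻¹ • φ₀ with hφdef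
  have hφv : φ (x2 - w₀) = 1 := by
    simp only [hφdef, LinearMap.smul_apply, smul_eq_mul]
    exact inv_mul_cancel₀ hφ₀x
  have hφT : ∀ x ∈ T, φ x = φ w₀ := by
    intro x hx
    have h1 : φ (x - w₀) = 0 := by
      have := hφ₀T _ (by
        have := AffineSubspace.vsub_mem_direction hx hw₀T
        simpa [vsub_eq_sub] using this)
      simp [hφdef, this]
    rw [map_sub, sub_eq_zero] at h1
    exact h1
  set ν : E → ℝ := fun x => φ x - φ w₀ with hνdef
  have hν0 : ∀ x ∈ T, ν x = 0 := fun x hx => by simp [hνdef, hφT x hx]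
  have hνspan : ∀ x ∈ affineSpan ℝ (W₁ : Set E), ν x = 0 := fun x hx =>
    hν0 x (hspanW₁T hx)
  have hνx2 : ν x2 = 1 := by
    have : φ x2 - φ w₀ = 1 := by rw [← map_sub]; exact hφv
    simpa [hνdef] using this
  set Wp := W.filter (fun w => 0 < ν w) with hWp
  have hx2p : x2 ∈ Wp := Finset.mem_filter.mpr ⟨hx2W, by rw [hνx2]; norm_num⟩
  have hWpne : Wp.Nonempty := ⟨x2, hx2p⟩
  have hflt : ∀ w ∈ Wp, f w < c := by
    intro w hw
    obtain ⟨hwW, hwq⟩ := Finset.mem_filter.mp hw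
    refine lt_of_le_of_ne (hle w hwW) fun hc => ?_
    have : w ∈ W₁ := Finset.mem_filter.mpr ⟨hwW, hc⟩
    have := hν0 w (hW₁T (Finset.mem_coe.mpr this))
    linarith
  set ts := Wp.inf' hWpne (fun w => (c - f w) / ν w) with hts
  have htspos : 0 < ts := by
    rw [hts, Finset.lt_inf'_iff]
    intro w hw
    exact div_pos (sub_pos.mpr (hflt w hw)) (Finset.mem_filter.mp hw).2
  set f' : E →ₗ[ℝ] ℝ := f + ts • φ with hf'def
  set c' : ℝ := c + ts * φ w₀ with hc'def
  have key : ∀ w : E, f' w - c' = (f w - c) + ts * ν w := by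
    intro w
    simp only [hf'def, hc'def, hνdef, LinearMap.add_apply, LinearMap.smul_apply, smul_eq_mul]
    ring
  have hle' : ∀ w ∈ W, f' w ≤ c' := by
    intro w hwW
    rcases le_or_gt (ν w) 0 with hn | hn
    · have h1 : ts * ν w ≤ 0 := mul_nonpos_of_nonneg_of_nonpos htspos.le hn
      have := key w
      have h2 := hle w hwW
      linarith
    · have hwp : w ∈ Wp := Finset.mem_filter.mpr ⟨hwW, hn⟩
      have h1 : ts ≤ (c - f w) / ν w := Finset.inf'_le _ hwp
      have h2 : ts * ν w ≤ c - f w := by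
        rw [← le_div_iff₀ hn] at *
        exact h1
      have := key w
      linarith
  have hmax' : ∃ w ∈ W, f' w = c' := by
    refine ⟨w₀, hw₀W, ?_⟩
    have h1 := key w₀
    have h2 := hν0 w₀ hw₀T
    have : f' w₀ - c' = 0 := by rw [h1, h2, hw₀c]; ring
    linarith
  have hprop' : ∃ w ∈ W, f' w ≠ c' := by
    refine ⟨x1, hx1W, fun hc => ?_⟩
    have h1 := key x1
    have h2 := hν0 x1 hx1T
    rw [hc, h2] at h1
    simp at h1
    linarith
  refine ⟨f', c', hle', hmax', hprop', ?_⟩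
  obtain ⟨ws, hwsWp, hwseq⟩ := Finset.exists_mem_eq_inf' hWpne (fun w => (c - f w) / ν w)
  obtain ⟨hwsW, hwsν⟩ := Finset.mem_filter.mp hwsWp
  have hwsW₁' : ws ∈ W.filter (fun w => f' w = c') := by
    refine Finset.mem_filter.mpr ⟨hwsW, ?_⟩
    have h1 := key ws
    have h2 : ts * ν ws = c - f ws := by
      rw [← hts] at hwseq
      rw [hwseq, div_mul_cancel₀ _ (ne_of_gt hwsν)]
    have : f' ws - c' = 0 := by rw [h1, h2]; ring
    linarith
  have hwsnot : ws ∉ affineSpan ℝ (W₁ : Set E) := fun hmem => by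
    have := hνspan ws hmem
    linarith
  have hsubW₁ : (W₁ : Set E) ⊆ ((W.filter (fun w => f' w = c')) : Set E) := by
    intro x hx
    obtain ⟨hxW, hxc⟩ := Finset.mem_filter.mp (Finset.mem_coe.mp hx)
    refine Finset.mem_coe.mpr (Finset.mem_filter.mpr ⟨hxW, ?_⟩)
    have h1 := key x
    have h2 := hν0 x (hW₁T hx)
    have : f' x - c' = 0 := by rw [h1, h2, hxc]; ring
    linarith
  have hins : (insert ws (W₁ : Set E)) ⊆ ((W.filter (fun w => f' w = c')) : Set E) := by
    intro x hx
    rcases Set.mem_insert_iff.mp hx with rfl | hx'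
    · exact Finset.mem_coe.mpr hwsW₁'
    · exact hsubW₁ hx'
  calc finrank ℝ (vectorSpan ℝ (W₁ : Set E))
      < finrank ℝ (vectorSpan ℝ (insert ws (W₁ : Set E))) :=
        finrank_vectorSpan_insert_lt ⟨w₀, hw₀s⟩ hwsnot
    _ ≤ finrank ℝ (vectorSpan ℝ ((W.filter (fun w => f' w = c')) : Set E)) :=
        Submodule.finrank_mono (vectorSpan_mono ℝ hins)

lemma exists_subfacet [FiniteDimensional ℝ E] (W : Finset E) {k : ℕ} (hk : 1 ≤ k)
    (hdim : finrank ℝ (vectorSpan ℝ (W : Set E)) = k) :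
    ∃ F : Set E, IsExtreme ℝ (convexHull ℝ (W : Set E)) F ∧ Convex ℝ F ∧ F.Nonempty ∧
      finrank ℝ (affineSpan ℝ F).direction = k - 1 := by
  classical
  -- two distinct points
  have hW2 : ∃ w1 ∈ W, ∃ w2 ∈ W, w1 ≠ w2 := by
    by_contra h
    push_neg at h
    rcases W.eq_empty_or_nonempty with rfl | ⟨w, hw⟩
    · rw [Finset.coe_empty, vectorSpan_empty] at hdim
      simp at hdim
      omega
    · have hsub : (W : Set E) ⊆ {w} := fun x hx => h x (Finset.mem_coe.mp hx) w hw
      have h1 : vectorSpan ℝ (W : Set E) ≤ vectorSpan ℝ ({w} : Set E) :=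
        vectorSpan_mono ℝ hsub
      rw [vectorSpan_singleton] at h1
      have h2 : finrank ℝ (vectorSpan ℝ (W : Set E)) ≤ finrank ℝ (⊥ : Submodule ℝ E) :=
        Submodule.finrank_mono h1
      rw [finrank_bot] at h2
      omega
  obtain ⟨w1, hw1, w2, hw2, hne12⟩ := hW2
  have hvne : (w1 - w2 : E) ≠ 0 := sub_ne_zero.mpr hne12
  have hf₀ : ∃ f : E →ₗ[ℝ] ℝ, f (w1 - w2) ≠ 0 := by
    by_contra h
    push_neg at h
    exact hvne ((Module.forall_dual_apply_eq_zero_iff ℝ (w1 - w2)).mp h)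
  obtain ⟨f₀, hf₀ne⟩ := hf₀
  have himne : (W.image f₀).Nonempty := ⟨f₀ w1, Finset.mem_image_of_mem f₀ hw1⟩
  set c₀ := (W.image f₀).max' himne with hc₀
  have hle₀ : ∀ w ∈ W, f₀ w ≤ c₀ := fun w hw =>
    Finset.le_max' _ _ (Finset.mem_image_of_mem f₀ hw)
  have hmax₀ : ∃ w ∈ W, f₀ w = c₀ := by
    obtain ⟨w, hw, hfw⟩ := Finset.mem_image.mp ((W.image f₀).max'_mem himne)
    exact ⟨w, hw, hfw⟩
  have hprop₀ : ∃ w ∈ W, f₀ w ≠ c₀ := by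
    have : f₀ w1 ≠ f₀ w2 := by
      intro h
      rw [← sub_eq_zero, ← map_sub] at h
      exact hf₀ne h
    rcases eq_or_ne (f₀ w1) c₀ with h | h
    · exact ⟨w2, hw2, by rw [← h]; exact this.symm⟩
    · exact ⟨w1, hw1, h⟩
  -- bound: for any valid (f, c), dimension of the face is < k
  have hbound : ∀ (f : E →ₗ[ℝ] ℝ) (c : ℝ), (∀ w ∈ W, f w ≤ c) → (∃ w ∈ W, f w = c) →
      (∃ w ∈ W, f w ≠ c) →
      finrank ℝ (vectorSpan ℝ ((W.filter (fun w => f w = c)) : Set E)) < k := by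
    intro f c h1 h2 h3
    obtain ⟨wm, hwmW, hwmc⟩ := h2
    obtain ⟨wp, hwpW, hwpc⟩ := h3
    rw [← hdim]
    refine finrank_lt_of_sep f c ?_ ⟨wm, Finset.mem_coe.mpr (Finset.mem_filter.mpr ⟨hwmW, hwmc⟩)⟩
      ?_ (subset_affineSpan ℝ _ (Finset.mem_coe.mpr hwpW)) hwpc
    · exact affineSpan_mono ℝ (by exact_mod_cast Finset.filter_subset _ _)
    · intro x hx
      exact (Finset.mem_filter.mp (Finset.mem_coe.mp hx)).2
  -- main induction
  have main : ∀ n : ℕ, ∀ f : E →ₗ[ℝ] ℝ, ∀ c : ℝ, (∀ w ∈ W, f w ≤ c) →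
      (∃ w ∈ W, f w = c) → (∃ w ∈ W, f w ≠ c) →
      k - 1 ≤ finrank ℝ (vectorSpan ℝ ((W.filter (fun w => f w = c)) : Set E)) + n →
      ∃ (f' : E →ₗ[ℝ] ℝ) (c' : ℝ), (∀ w ∈ W, f' w ≤ c') ∧ (∃ w ∈ W, f' w = c') ∧
        (∃ w ∈ W, f' w ≠ c') ∧
        finrank ℝ (vectorSpan ℝ ((W.filter (fun w => f' w = c')) : Set E)) = k - 1 := by
    intro n
    induction n with
    | zero =>
      intro f c h1 h2 h3 h4
      exact ⟨f, c, h1, h2, h3, by have := hbound f c h1 h2 h3; omega⟩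
    | succ n ih =>
      intro f c h1 h2 h3 h4
      by_cases hcase :
          finrank ℝ (vectorSpan ℝ ((W.filter (fun w => f w = c)) : Set E)) = k - 1
      · exact ⟨f, c, h1, h2, h3, hcase⟩
      · have hub := hbound f c h1 h2 h3
        obtain ⟨f', c', a1, a2, a3, hgt⟩ := facet_step W hdim f c h1 h2 h3 (by omega)
        exact ih f' c' a1 a2 a3 (by omega)
  obtain ⟨f, c, h1, h2, h3, hdim'⟩ := main (k - 1) f₀ c₀ hle₀ hmax₀ hprop₀ (by omega)
  -- the face
  set F : Set E := convexHull ℝ (W : Set E) ∩ {x | f x = c} with hF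
  have hWhull : (W : Set E) ⊆ convexHull ℝ (W : Set E) := subset_convexHull ℝ _
  have hfc_hull : ∀ x ∈ convexHull ℝ (W : Set E), f x ≤ c :=
    fun x hx => convexHull_min (fun w hw => h1 w (Finset.mem_coe.mp hw))
      (convex_halfSpace_le (LinearMap.isLinear f) c) hx
  have hW₁F : ((W.filter (fun w => f w = c)) : Set E) ⊆ F := by
    intro x hx
    obtain ⟨hxW, hxc⟩ := Finset.mem_filter.mp (Finset.mem_coe.mp hx)
    exact ⟨hWhull (Finset.mem_coe.mpr hxW), hxc⟩
  obtain ⟨wm, hwmW, hwmc⟩ := h2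
  have hFne : F.Nonempty := ⟨wm, hW₁F (Finset.mem_coe.mpr (Finset.mem_filter.mpr ⟨hwmW, hwmc⟩))⟩
  refine ⟨F, ⟨Set.inter_subset_left, ?_⟩, ?_, hFne, ?_⟩
  · -- extremeness
    intro x₁ hx₁ x₂ hx₂ x hxF hseg
    obtain ⟨a, b, ha, hb, hab, hxeq⟩ := hseg
    have hfx : f x = c := hxF.2
    have hcomb : a * f x₁ + b * f x₂ = c := by
      rw [← hfx, ← hxeq]
      simp [map_add, map_smul, smul_eq_mul]
    have hle1 := hfc_hull x₁ hx₁
    have hle2 := hfc_hull x₂ hx₂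
    have key2 : a * (c - f x₁) + b * (c - f x₂) = 0 := by linear_combination c * hab - hcomb
    have t1 : 0 ≤ a * (c - f x₁) := mul_nonneg ha.le (sub_nonneg.mpr hle1)
    have t2 : 0 ≤ b * (c - f x₂) := mul_nonneg hb.le (sub_nonneg.mpr hle2)
    have e1 : a * (c - f x₁) = 0 := by linarith
    have e2 : b * (c - f x₂) = 0 := by linarith
    have hf1 : f x₁ = c := by
      rcases mul_eq_zero.mp e1 with h | h
      · exact absurd h (ne_of_gt ha)
      · linarith
    have hf2 : f x₂ = c := by
      rcases mul_eq_zero.mp e2 with h | h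
      · exact absurd h (ne_of_gt hb)
      · linarith
    exact ⟨hx₁, hf1⟩
  · exact (convex_convexHull ℝ _).inter (convex_hyperplane (LinearMap.isLinear f) c)
  · -- dimension
    have hlow : k - 1 ≤ finrank ℝ (affineSpan ℝ F).direction := by
      rw [direction_affineSpan, ← hdim']
      exact Submodule.finrank_mono (vectorSpan_mono ℝ hW₁F)
    have hup : finrank ℝ (vectorSpan ℝ F) < k := by
      obtain ⟨wp, hwpW, hwpc⟩ := h3
      rw [← hdim]
      refine finrank_lt_of_sep f c ?_ hFne (fun x hx => hx.2)
        (subset_affineSpan ℝ _ (Finset.mem_coe.mpr hwpW)) hwpc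
      have hFsub : F ⊆ (affineSpan ℝ (W : Set E) : Set E) := by
        intro x hx
        have := hx.1
        rw [← affineSpan_convexHull (𝕜 := ℝ) (W : Set E)] at *
        exact subset_affineSpan ℝ _ hx.1
      exact affineSpan_le.mpr hFsub
    rw [direction_affineSpan] at hlow ⊢
    omega

lemma mem_affineSpan_smul_iff {s : Set E} {c : ℝ} {x : E} :
    x ∈ affineSpan ℝ (c • s) ↔ ∃ p ∈ affineSpan ℝ s, c • p = x := by
  have himg : c • s = (⇑((c • (LinearMap.id : E →ₗ[ℝ] E)).toAffineMap)) '' s := by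
    ext y
    simp [Set.mem_smul_set]
  rw [himg, ← AffineSubspace.map_span]
  exact AffineSubspace.mem_map

lemma sub_mem_affineSpan_smul {s : Set E} {a b : ℝ} (hab : a - b ≠ 0) {z w : E}
    (hz : z ∈ affineSpan ℝ (a • s)) (hw : w ∈ affineSpan ℝ (b • s)) :
    z - w ∈ affineSpan ℝ ((a - b) • s) := by
  rw [mem_affineSpan_smul_iff] at hz hw ⊢
  obtain ⟨p, hp, rfl⟩ := hz
  obtain ⟨q, hq, rfl⟩ := hw
  refine ⟨(b / (a - b)) • (p - q) + p, ?_, ?_⟩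
  · have := AffineSubspace.smul_vsub_vadd_mem (affineSpan ℝ s) (b / (a - b)) hp hq hp
    simpa [vsub_eq_sub, vadd_eq_add] using this
  · have hcalc : (a - b) * (b / (a - b)) = b := by field_simp
    rw [smul_add, smul_smul, hcalc, smul_sub, sub_smul]
    abel

lemma dvd_of_least {M : Set ℕ} {b : ℕ} (hb : IsLeast M b) (hbpos : 0 < b)
    (hsub : ∀ a ∈ M, b < a → a - b ∈ M) : ∀ a ∈ M, b ∣ a := by
  intro a
  induction a using Nat.strong_induction_on with
  | _ a ih =>
    intro ha
    rcases lt_trichotomy a b with h | h | h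
    · exact absurd (hb.2 ha) (not_le.mpr h)
    · exact h ▸ dvd_refl b
    · obtain ⟨t, ht⟩ := ih (a - b) (by omega) (hsub a ha h)
      refine ⟨t + 1, ?_⟩
      have : a - b = b * t := ht
      have hba : b ≤ a := h.le
      rw [Nat.mul_add, Nat.mul_one]
      omega

end Stmt16Aux

open Stmt16Aux in
/-- The indices of a `d`-dimensional rational polytope form a divisibility chain
`j_d ∣ j_{d-1} ∣ ⋯ ∣ j_0`, where the `i`-index `j_i` is the least positive integer
`m` such that the affine span of every `i`-dimensional face of `m·P` contains a
lattice point.  (Faces are the nonempty convex extreme subsets of `P`.) -/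
theorem stmt_16 (d : ℕ) (hd : 0 < d) (V : Finset (Fin d → ℚ)) (P : Set (Fin d → ℝ))
    (hP : P = convexHull ℝ ((fun (q : Fin d → ℚ) (k : Fin d) => ((q k : ℝ))) '' ↑V))
    (hfull : (interior P).Nonempty)
    (j : ℕ → ℕ)
    (hj : ∀ i : ℕ, i ≤ d →
      IsLeast {m : ℕ | 0 < m ∧
        ∀ F : Set (Fin d → ℝ), IsExtreme ℝ P F → Convex ℝ F → F.Nonempty →
          Module.finrank ℝ (affineSpan ℝ F).direction = i →
          ∃ z : Fin d → ℤ, (fun k => (z k : ℝ)) ∈ affineSpan ℝ ((m : ℝ) • F)} (j i)) :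
    ∀ i : ℕ, i < d → j (i + 1) ∣ j i := by
  classical
  intro i hi
  have h1 := hj i hi.le
  have h2 := hj (i + 1) hi
  have hPc : Convex ℝ P := by rw [hP]; exact convex_convexHull ℝ _
  obtain ⟨VF, hVF⟩ := Set.Finite.exists_finset_coe
    (Set.Finite.image (fun (q : Fin d → ℚ) (k : Fin d) => ((q k : ℝ))) V.finite_toSet)
  have hPV : P = convexHull ℝ (VF : Set (Fin d → ℝ)) := by rw [hP, hVF]
  have hmem : j i ∈ {m : ℕ | 0 < m ∧
      ∀ F : Set (Fin d → ℝ), IsExtreme ℝ P F → Convex ℝ F → F.Nonempty →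
        Module.finrank ℝ (affineSpan ℝ F).direction = i + 1 →
        ∃ z : Fin d → ℤ, (fun k => (z k : ℝ)) ∈ affineSpan ℝ ((m : ℝ) • F)} := by
    refine ⟨h1.1.1, ?_⟩
    intro G hGext hGconv hGne hGdim
    obtain ⟨W, hWG, hGW⟩ := face_hull hPc VF hPV hGext hGconv
    have hWdim : Module.finrank ℝ (vectorSpan ℝ (W : Set (Fin d → ℝ))) = i + 1 := by
      have hsp : affineSpan ℝ G = affineSpan ℝ (W : Set (Fin d → ℝ)) := by
        rw [hGW, affineSpan_convexHull]
      rw [← direction_affineSpan, ← hsp]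
      exact hGdim
    obtain ⟨F, hFex, hFc, hFne, hFdim⟩ := exists_subfacet W (by omega) hWdim
    rw [← hGW] at hFex
    have hFP : IsExtreme ℝ P F := hGext.trans hFex
    rw [Nat.add_sub_cancel] at hFdim
    obtain ⟨z, hz⟩ := h1.1.2 F hFP hFc hFne hFdim
    refine ⟨z, ?_⟩
    exact affineSpan_mono ℝ (Set.smul_set_mono hFex.1) hz
  have hclos : ∀ a ∈ {m : ℕ | 0 < m ∧
      ∀ F : Set (Fin d → ℝ), IsExtreme ℝ P F → Convex ℝ F → F.Nonempty →
        Module.finrank ℝ (affineSpan ℝ F).direction = i + 1 →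
        ∃ z : Fin d → ℤ, (fun k => (z k : ℝ)) ∈ affineSpan ℝ ((m : ℝ) • F)},
      j (i + 1) < a → a - j (i + 1) ∈ {m : ℕ | 0 < m ∧
      ∀ F : Set (Fin d → ℝ), IsExtreme ℝ P F → Convex ℝ F → F.Nonempty →
        Module.finrank ℝ (affineSpan ℝ F).direction = i + 1 →
        ∃ z : Fin d → ℤ, (fun k => (z k : ℝ)) ∈ affineSpan ℝ ((m : ℝ) • F)} := by
    intro a ha hlt
    obtain ⟨hapos, haF⟩ := ha
    refine ⟨by omega, ?_⟩
    intro F hF hFc hFne hFd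
    obtain ⟨za, hza⟩ := haF F hF hFc hFne hFd
    obtain ⟨zb, hzb⟩ := h2.1.2 F hF hFc hFne hFd
    refine ⟨fun k => za k - zb k, ?_⟩
    have hne : ((a : ℝ)) - ((j (i + 1) : ℝ)) ≠ 0 := by
      have h : (j (i + 1) : ℝ) < (a : ℝ) := by exact_mod_cast hlt
      linarith
    have hmem2 := sub_mem_affineSpan_smul hne hza hzb
    have hcast : (fun k => (((fun k => za k - zb k) k : ℤ) : ℝ)) =
        (fun k => (za k : ℝ)) - (fun k => (zb k : ℝ)) := by
      funext k; simp only [Pi.sub_apply]; push_cast; ring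
    have hcast2 : ((a - j (i + 1) : ℕ) : ℝ) = (a : ℝ) - (j (i + 1) : ℝ) :=
      Nat.cast_sub hlt.le
    rw [hcast, hcast2]
    exact hmem2
  exact dvd_of_least h2 h2.1.1 hclos (j i) hmem
end
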